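/- Let φ and ψ be qpf formulas and F = fv(φ) ∩ fv(ψ). Assume φ*ψ is satisfiable and that for all x, y ∈ F the equality x = y is not a logical consequence of φ. Let η be the separating conjunction of all equalities x = y with x, y ∈ F such that x = y is a logical consequence of ψ. Then tw([[∃∃(φ*η)]]) ≤ tw([[∃∃(φ*ψ)]]) + |F|, where ∃∃χ denotes the existential closure of χ. -/

import Mathlib

/-!
Common definitions for the formalization of
"The Treewidth Boundedness Problem for an Inductive Separation Logic of Relations".
-/

namespace SLRTW

/-! ### Relational structures over a fixed universe `V` -/

/-- A structure over the relational signature given by `Rel`, `ar` with universe `V`: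
each relation symbol is interpreted as a finite set of tuples, and only finitely many
relation symbols have a nonempty interpretation. -/
structure Str (Rel : Type) (ar : Rel → ℕ) (V : Type) where
  interp : ∀ r : Rel, Set (Fin (ar r) → V)
  finite_interp : ∀ r, (interp r).Finite
  finite_active : {r : Rel | interp r ≠ ∅}.Finite

/-- Formulas of the separation logic of relations, over relation symbols `Rel` (with
arities `ar`) and predicate symbols `Pr` (with arities `pa`).  Variables are natural
numbers; by convention, the parameters of a predicate of arity `n` are `0, …, n-1`. -/
inductive SLR (Rel : Type) (ar : Rel → ℕ) (Pr : Type) (pa : Pr → ℕ) : Type where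
  | emp : SLR Rel ar Pr pa
  | eq (x y : ℕ) : SLR Rel ar Pr pa
  | ne (x y : ℕ) : SLR Rel ar Pr pa
  | rel (r : Rel) (a : Fin (ar r) → ℕ) : SLR Rel ar Pr pa
  | pred (A : Pr) (a : Fin (pa A) → ℕ) : SLR Rel ar Pr pa
  | star (φ ψ : SLR Rel ar Pr pa) : SLR Rel ar Pr pa
  | ex (x : ℕ) (φ : SLR Rel ar Pr pa) : SLR Rel ar Pr pa

/-- An RGB color scheme: a partition of the set of colors `𝒫(Rel)` into red, green
and blue colors, such that any two blue colors intersect, every green color intersects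
every blue color, and every red color is disjoint from some blue color. -/
structure RGB (Rel : Type) where
  red : Set (Set Rel)
  green : Set (Set Rel)
  blue : Set (Set Rel)
  cover : ∀ C : Set Rel, C ∈ red ∨ C ∈ green ∨ C ∈ blue
  red_green : red ∩ green = ∅
  red_blue : red ∩ blue = ∅
  green_blue : green ∩ blue = ∅
  blue_blue_meet : ∀ C1 ∈ blue, ∀ C2 ∈ blue, (C1 ∩ C2).Nonempty
  green_blue_meet : ∀ C1 ∈ green, ∀ C2 ∈ blue, (C1 ∩ C2).Nonempty
  red_sep : ∀ C1 ∈ red, ∃ C2 ∈ blue, C1 ∩ C2 = ∅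

section Defs1

variable {Rel : Type} {ar : Rel → ℕ} {V : Type} {Pr : Type} {pa : Pr → ℕ}

/-- The support of a structure: the elements occurring in some tuple. -/
def Str.supp (S : Str Rel ar V) : Set V :=
  { u | ∃ (r : Rel) (t : Fin (ar r) → V), t ∈ S.interp r ∧ ∃ i, t i = u }

/-- Two structures are locally disjoint iff their interpretations are pointwise disjoint. -/
def LocDisj (S1 S2 : Str Rel ar V) : Prop :=
  ∀ r, S1.interp r ∩ S2.interp r = ∅

/-- Composition of structures (pointwise union of the interpretations). -/
def Str.comp (S1 S2 : Str Rel ar V) : Str Rel ar V where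
  interp r := S1.interp r ∪ S2.interp r
  finite_interp r := (S1.finite_interp r).union (S2.finite_interp r)
  finite_active := by
    refine (S1.finite_active.union S2.finite_active).subset ?_
    intro r hr
    simp only [Set.mem_setOf_eq, Set.mem_union, ne_eq] at hr ⊢
    rw [Set.union_empty_iff] at hr
    tauto

/-- Composition of a finite family of structures. -/
def bigComp {n : ℕ} (Ss : Fin n → Str Rel ar V) : Str Rel ar V where
  interp r := ⋃ i, (Ss i).interp r
  finite_interp r := Set.finite_iUnion fun i => (Ss i).finite_interp r
  finite_active := by
    refine (Set.finite_iUnion fun i => (Ss i).finite_active).subset ?_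
    intro r hr
    simp only [Set.mem_setOf_eq, ne_eq, Set.iUnion_eq_empty, Set.mem_iUnion] at hr ⊢
    push_neg at hr
    obtain ⟨i, hi⟩ := hr
    exact ⟨i, Set.nonempty_iff_ne_empty.mp hi⟩

/-- A tree decomposition of a structure: a finite tree whose nodes carry finite bags of
elements, covering every tuple, and such that the set of nodes containing any given
support element is nonempty and connected. -/
structure TreeDecomp (S : Str Rel ar V) where
  ι : Type
  instFin : Fintype ι
  G : SimpleGraph ι
  isTree : G.IsTree
  bag : ι → Finset V
  bag_cover : ∀ (r : Rel), ∀ t ∈ S.interp r, ∃ n : ι, ∀ i, t i ∈ bag n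
  bag_conn : ∀ u ∈ S.supp, (SimpleGraph.induce {n : ι | u ∈ bag n} G).Connected

attribute [instance] TreeDecomp.instFin

/-- The width of a tree decomposition: maximal bag size minus one. -/
def TreeDecomp.width {S : Str Rel ar V} (T : TreeDecomp S) : ℕ :=
  (Finset.univ.sup fun n : T.ι => (T.bag n).card) - 1

/-- The treewidth of a structure: the minimal width of a tree decomposition. -/
noncomputable def tw (S : Str Rel ar V) : ℕ :=
  sInf { w | ∃ T : TreeDecomp S, T.width = w }

/-- A set of structures is treewidth-bounded iff the treewidths of its members are
bounded. -/
def TWB (𝒮 : Set (Str Rel ar V)) : Prop :=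
  ∃ k : ℕ, ∀ S ∈ 𝒮, tw S ≤ k

/-- The supremum of the treewidths of a set of structures (in `ℕ∞`). -/
noncomputable def twSet (𝒮 : Set (Str Rel ar V)) : ℕ∞ :=
  ⨆ S ∈ 𝒮, (tw S : ℕ∞)

namespace SLR

/-- Free variables of a formula. -/
def fv : SLR Rel ar Pr pa → Set ℕ
  | .emp => ∅
  | .eq x y => {x, y}
  | .ne x y => {x, y}
  | .rel _ a => Set.range a
  | .pred _ a => Set.range a
  | .star φ ψ => φ.fv ∪ ψ.fv
  | .ex x φ => φ.fv \ {x}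

/-- All variables (free or bound) occurring in a formula. -/
def vars : SLR Rel ar Pr pa → Set ℕ
  | .emp => ∅
  | .eq x y => {x, y}
  | .ne x y => {x, y}
  | .rel _ a => Set.range a
  | .pred _ a => Set.range a
  | .star φ ψ => φ.vars ∪ ψ.vars
  | .ex x φ => insert x φ.vars

/-- Predicate-free formulas. -/
def PredFree : SLR Rel ar Pr pa → Prop
  | .pred _ _ => False
  | .star φ ψ => φ.PredFree ∧ ψ.PredFree
  | .ex _ φ => φ.PredFree
  | _ => True

/-- Quantifier- and predicate-free (qpf) formulas. -/
def QPF : SLR Rel ar Pr pa → Prop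
  | .pred _ _ => False
  | .ex _ _ => False
  | .star φ ψ => φ.QPF ∧ ψ.QPF
  | _ => True

/-- Formulas containing only relation atoms. -/
def RelOnly : SLR Rel ar Pr pa → Prop
  | .rel _ _ => True
  | .star φ ψ => φ.RelOnly ∧ ψ.RelOnly
  | _ => False

/-- Formulas containing only equality atoms (and `emp`). -/
def EqOnly : SLR Rel ar Pr pa → Prop
  | .emp => True
  | .eq _ _ => True
  | .star φ ψ => φ.EqOnly ∧ ψ.EqOnly
  | _ => False

/-- Equality-free formulas: no equality atom and no predicate atom in which the same
variable occurs twice. -/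
def EqFreeF : SLR Rel ar Pr pa → Prop
  | .eq _ _ => False
  | .pred _ a => Function.Injective a
  | .star φ ψ => φ.EqFreeF ∧ ψ.EqFreeF
  | .ex _ φ => φ.EqFreeF
  | _ => True

/-- The number of predicate atoms occurring in a formula. -/
def npred : SLR Rel ar Pr pa → ℕ
  | .pred _ _ => 1
  | .star φ ψ => φ.npred + ψ.npred
  | .ex _ φ => φ.npred
  | _ => 0

/-- The number of relation atoms occurring in a formula. -/
def nrel : SLR Rel ar Pr pa → ℕ
  | .rel _ _ => 1
  | .star φ ψ => φ.nrel + ψ.nrel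
  | .ex _ φ => φ.nrel
  | _ => 0

/-- The set of relation symbols occurring in a formula. -/
def rels : SLR Rel ar Pr pa → Set Rel
  | .rel r _ => {r}
  | .star φ ψ => φ.rels ∪ ψ.rels
  | .ex _ φ => φ.rels
  | _ => ∅

/-- The set of predicate symbols occurring in a formula. -/
def preds : SLR Rel ar Pr pa → Set Pr
  | .pred A _ => {A}
  | .star φ ψ => φ.preds ∪ ψ.preds
  | .ex _ φ => φ.preds
  | _ => ∅

/-- The quantifier-free matrix of a formula (erasing all existential quantifiers). -/
def matrix : SLR Rel ar Pr pa → SLR Rel ar Pr pa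
  | .ex _ φ => φ.matrix
  | .star φ ψ => .star φ.matrix ψ.matrix
  | φ => φ

/-- The list of bound variables of a formula. -/
def binders : SLR Rel ar Pr pa → List ℕ
  | .ex x φ => x :: φ.binders
  | .star φ ψ => φ.binders ++ ψ.binders
  | _ => []

/-- A formula is well-named iff its bound variables are pairwise distinct and distinct
from its free variables.  For a well-named formula, the matrix faithfully represents
the prenex form. -/
def WellNamed (χ : SLR Rel ar Pr pa) : Prop :=
  χ.binders.Nodup ∧ ∀ x ∈ χ.binders, x ∉ χ.fv

/-- The disequality `x ≠ y` occurs in the formula (as an unordered pair). -/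
def neOccurs : SLR Rel ar Pr pa → ℕ → ℕ → Prop
  | .ne a b, x, y => (a = x ∧ b = y) ∨ (a = y ∧ b = x)
  | .star φ ψ, x, y => φ.neOccurs x y ∨ ψ.neOccurs x y
  | .ex _ φ, x, y => φ.neOccurs x y
  | _, _, _ => False

/-- The equality `x = y` occurs in the formula (as an unordered pair). -/
def eqOccurs : SLR Rel ar Pr pa → ℕ → ℕ → Prop
  | .eq a b, x, y => (a = x ∧ b = y) ∨ (a = y ∧ b = x)
  | .star φ ψ, x, y => φ.eqOccurs x y ∨ ψ.eqOccurs x y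
  | .ex _ φ, x, y => φ.eqOccurs x y
  | _, _, _ => False

end SLR

/-- The nullary predicate atom `A()` (the arguments are irrelevant when `pa A = 0`). -/
def natom (A : Pr) : SLR Rel ar Pr pa := .pred A fun _ => 0

/-- Iterated separating conjunction: `starAll φ [χ1, …, χn] = χ1 * (χ2 * … * (χn * φ))`. -/
def starAll (φ : SLR Rel ar Pr pa) : List (SLR Rel ar Pr pa) → SLR Rel ar Pr pa
  | [] => φ
  | χ :: l => .star χ (starAll φ l)

end Defs1

/-- A set of inductive definitions (SID): a finite set of rules `A(0,…,pa A - 1) ← φ`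
where the free variables of `φ` are among the parameters `0, …, pa A - 1`. -/
structure SID (Rel : Type) (ar : Rel → ℕ) (Pr : Type) (pa : Pr → ℕ) where
  rules : Pr → Set (SLR Rel ar Pr pa)
  finite_rules : {p : Pr × SLR Rel ar Pr pa | p.2 ∈ rules p.1}.Finite
  wf : ∀ A, ∀ φ ∈ rules A, SLR.fv φ ⊆ {x | x < pa A}

section Defs2

variable {Rel : Type} {ar : Rel → ℕ} {V : Type} {Pr : Type} {pa : Pr → ℕ}

/-- The empty structure predicate. -/
def EmpS (S : Str Rel ar V) : Prop := ∀ r, S.interp r = ∅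

/-- The satisfaction relation of SLR, parameterized by a store and an SID.
A predicate atom `A(y₁,…,yₙ)` is satisfied iff the body of some rule for `A` is
satisfied under the store mapping the parameter `i` to the value of `yᵢ₊₁`. -/
inductive Sat (Δ : SID Rel ar Pr pa) :
    Str Rel ar V → (ℕ → V) → SLR Rel ar Pr pa → Prop where
  | emp {S : Str Rel ar V} {s : ℕ → V} : EmpS S → Sat Δ S s .emp
  | eq {S : Str Rel ar V} {s : ℕ → V} {x y : ℕ} :
      EmpS S → s x = s y → Sat Δ S s (.eq x y)
  | ne {S : Str Rel ar V} {s : ℕ → V} {x y : ℕ} :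
      EmpS S → s x ≠ s y → Sat Δ S s (.ne x y)
  | rel {S : Str Rel ar V} {s : ℕ → V} {r : Rel} {a : Fin (ar r) → ℕ} :
      S.interp r = {fun i => s (a i)} → (∀ r', r' ≠ r → S.interp r' = ∅) →
      Sat Δ S s (.rel r a)
  | pred {S : Str Rel ar V} {s : ℕ → V} {A : Pr} {a : Fin (pa A) → ℕ}
      {body : SLR Rel ar Pr pa} :
      body ∈ Δ.rules A →
      Sat Δ S (fun n => if h : n < pa A then s (a ⟨n, h⟩) else s n) body →
      Sat Δ S s (.pred A a)
  | star {S1 S2 : Str Rel ar V} {s : ℕ → V} {φ ψ : SLR Rel ar Pr pa} :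
      LocDisj S1 S2 → Sat Δ S1 s φ → Sat Δ S2 s ψ →
      Sat Δ (S1.comp S2) s (.star φ ψ)
  | ex {S : Str Rel ar V} {s : ℕ → V} {x : ℕ} {φ : SLR Rel ar Pr pa} (u : V) :
      Sat Δ S (Function.update s x u) φ → Sat Δ S s (.ex x φ)

/-- The set of `Δ`-models of a sentence (over universe `V`). -/
def SMod (Δ : SID Rel ar Pr pa) (φ : SLR Rel ar Pr pa) : Set (Str Rel ar V) :=
  { S | ∃ s : ℕ → V, Sat Δ S s φ }

/-- `IsSubst f φ φ'` holds iff `φ'` is obtained from `φ` by the capture-avoiding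
substitution of `f x` for each free variable `x`, the bound variables being renamed
to avoid clashes. -/
inductive IsSubst : (ℕ → ℕ) → SLR Rel ar Pr pa → SLR Rel ar Pr pa → Prop where
  | emp {f : ℕ → ℕ} : IsSubst f .emp .emp
  | eq {f : ℕ → ℕ} {x y : ℕ} : IsSubst f (.eq x y) (.eq (f x) (f y))
  | ne {f : ℕ → ℕ} {x y : ℕ} : IsSubst f (.ne x y) (.ne (f x) (f y))
  | rel {f : ℕ → ℕ} {r : Rel} {a : Fin (ar r) → ℕ} :
      IsSubst f (.rel r a) (.rel r (f ∘ a))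
  | pred {f : ℕ → ℕ} {A : Pr} {a : Fin (pa A) → ℕ} :
      IsSubst f (.pred A a) (.pred A (f ∘ a))
  | star {f : ℕ → ℕ} {φ ψ φ' ψ' : SLR Rel ar Pr pa} :
      IsSubst f φ φ' → IsSubst f ψ ψ' → IsSubst f (.star φ ψ) (.star φ' ψ')
  | ex {f : ℕ → ℕ} {x z : ℕ} {φ φ' : SLR Rel ar Pr pa} :
      (∀ y ∈ SLR.fv φ, y ≠ x → f y ≠ z) →
      IsSubst (Function.update f x z) φ φ' →
      IsSubst f (.ex x φ) (.ex z φ')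

/-- One unfolding step: replace one predicate atom `A(y₁,…,yₙ)` by the body of a rule
for `A`, with the parameters substituted by `y₁,…,yₙ` (bound variables renamed to
avoid clashes). -/
inductive Step (Δ : SID Rel ar Pr pa) : SLR Rel ar Pr pa → SLR Rel ar Pr pa → Prop where
  | unfold {A : Pr} {a : Fin (pa A) → ℕ} {body ψ : SLR Rel ar Pr pa} :
      body ∈ Δ.rules A →
      IsSubst (fun n => if h : n < pa A then a ⟨n, h⟩ else n) body ψ →
      Step Δ (.pred A a) ψ
  | starL {φ φ' ψ : SLR Rel ar Pr pa} : Step Δ φ φ' → Step Δ (.star φ ψ) (.star φ' ψ)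
  | starR {φ ψ ψ' : SLR Rel ar Pr pa} : Step Δ ψ ψ' → Step Δ (.star φ ψ) (.star φ ψ')
  | exC {x : ℕ} {φ φ' : SLR Rel ar Pr pa} : Step Δ φ φ' → Step Δ (.ex x φ) (.ex x φ')

/-- `Δ`-unfolding: the reflexive-transitive closure of unfolding steps. -/
def Unfolds (Δ : SID Rel ar Pr pa) : SLR Rel ar Pr pa → SLR Rel ar Pr pa → Prop :=
  Relation.ReflTransGen (Step Δ)

/-- `x = y` is a logical consequence of `ψ`. -/
def EqConseq (Δ : SID Rel ar Pr pa) (ψ : SLR Rel ar Pr pa) (x y : ℕ) : Prop :=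
  ∀ (S : Str Rel ar V) (s : ℕ → V), Sat Δ S s ψ → s x = s y

/-- A store is canonical for `ψ` iff it identifies only variables that are equated as a
logical consequence of `ψ`. -/
def CanonicalStore (Δ : SID Rel ar Pr pa) (s : ℕ → V) (ψ : SLR Rel ar Pr pa) : Prop :=
  ∀ x ∈ ψ.fv, ∀ y ∈ ψ.fv, s x = s y → EqConseq (V := V) Δ ψ x y

/-- `(S, d)` is a rich canonical `Δ`-model of `φ`: for some complete `Δ`-unfolding of
`φ` into a well-named predicate-free formula `χ` (i.e. of the form `∃x⃗.ψ` with `ψ` qpf,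
up to hoisting of quantifiers) and some store canonical for the matrix `ψ`, the
structure `S` satisfies `ψ` and `d` records the disequalities of `ψ` under the store. -/
def RichCanonical (Δ : SID Rel ar Pr pa) (φ : SLR Rel ar Pr pa)
    (S : Str Rel ar V) (d : V → V → Prop) : Prop :=
  ∃ χ : SLR Rel ar Pr pa, Unfolds Δ φ χ ∧ χ.PredFree ∧ χ.WellNamed ∧
    ∃ s : ℕ → V, CanonicalStore Δ s χ.matrix ∧ Sat Δ S s χ.matrix ∧
      ∀ u v : V, d u v ↔ ∃ x y : ℕ, s x = u ∧ s y = v ∧ χ.matrix.neOccurs x y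

/-- The set of canonical `Δ`-models of `φ`. -/
def Canonical (Δ : SID Rel ar Pr pa) (φ : SLR Rel ar Pr pa) : Set (Str Rel ar V) :=
  { S | ∃ d, RichCanonical Δ φ S d }

/-- `S1` is a substructure of `S2`: its interpretation consists exactly of the tuples of
`S2` all of whose elements belong to the support of `S1`. -/
def Substr (S1 S2 : Str Rel ar V) : Prop :=
  ∀ r, S1.interp r = { t ∈ S2.interp r | ∀ i, t i ∈ S1.supp }

/-- Two elements touch iff they occur in a common tuple. -/
def Touching (S : Str Rel ar V) (u v : V) : Prop :=
  ∃ (r : Rel) (t : Fin (ar r) → V), t ∈ S.interp r ∧ (∃ i, t i = u) ∧ ∃ j, t j = v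

/-- A structure is connected iff any two support elements are joined by a path of
pairwise overlapping tuples. -/
def ConnectedS (S : Str Rel ar V) : Prop :=
  ∀ u ∈ S.supp, ∀ v ∈ S.supp, Relation.ReflTransGen (Touching S) u v

/-- `S1` is a maximally connected substructure of `S2`. -/
def MaxConn (S1 S2 : Str Rel ar V) : Prop :=
  Substr S1 S2 ∧ ConnectedS S1 ∧
    ∀ S1' : Str Rel ar V, Substr S1' S2 → ConnectedS S1' → Substr S1 S1' → S1 = S1'

/-- The set of maximally connected substructures of a structure. -/
def split (S : Str Rel ar V) : Set (Str Rel ar V) := { S' | MaxConn S' S }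

/-- `split`, lifted to sets of structures. -/
def splitSet (𝒮 : Set (Str Rel ar V)) : Set (Str Rel ar V) := ⋃ S ∈ 𝒮, split S

/-- The smallest equivalence relation containing `R`. -/
def EqvOf (R : V → V → Prop) (a b : V) : Prop :=
  ∀ E : V → V → Prop, Equivalence E → (∀ x y, R x y → E x y) → E a b

/-- An equivalence relation is compatible with a structure iff any two distinct tuples of
the interpretation of a relation symbol differ at some position modulo the relation. -/
def CompatibleE (S : Str Rel ar V) (E : V → V → Prop) : Prop :=
  ∀ r, ∀ t1 ∈ S.interp r, ∀ t2 ∈ S.interp r, t1 ≠ t2 → ∃ i, ¬ E (t1 i) (t2 i)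

/-- The image of a structure under a map on elements. -/
def mapStr (h : V → V) (S : Str Rel ar V) : Str Rel ar V where
  interp r := (fun t => h ∘ t) '' S.interp r
  finite_interp r := (S.finite_interp r).image _
  finite_active := by
    refine S.finite_active.subset ?_
    intro r hr
    simp only [Set.mem_setOf_eq, ne_eq] at hr ⊢
    intro h0
    exact hr (by rw [h0, Set.image_empty])

/-- `S'` is (a copy over `V` of) the quotient of `S` by the equivalence relation `E`. -/
def QuotBy (S : Str Rel ar V) (E : V → V → Prop) (S' : Str Rel ar V) : Prop :=
  ∃ h : V → V, (∀ u ∈ S.supp, ∀ v ∈ S.supp, (E u v ↔ h u = h v)) ∧ S' = mapStr h S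

/-- `S'` is an isomorphic copy of `S` (over the same universe `V`). -/
def IsoCopy (S S' : Str Rel ar V) : Prop :=
  ∃ h : V → V, Set.InjOn h S.supp ∧ S' = mapStr h S

/-- A matching: a set of pairs such that distinct pairs share no element. -/
def IsMatching (M : Set (V × V)) : Prop :=
  ∀ p ∈ M, ∀ q ∈ M, p ≠ q → ({p.1, p.2} ∩ {q.1, q.2} : Set V) = ∅

/-- The set of internal fusions of a structure: quotients by compatible equivalence
relations (up to isomorphism). -/
def IntFusion (S : Str Rel ar V) : Set (Str Rel ar V) :=
  { S' | ∃ E : V → V → Prop, Equivalence E ∧ CompatibleE S E ∧ QuotBy S E S' }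

/-- Internal fusions of members of a set of structures. -/
def ifSet (𝒮 : Set (Str Rel ar V)) : Set (Str Rel ar V) := ⋃ S ∈ 𝒮, IntFusion S

/-- Internal fusions of a rich canonical model: quotients by compatible equivalence
relations that do not violate the disequality relation `d`. -/
def SIntFusion (S : Str Rel ar V) (d : V → V → Prop) : Set (Str Rel ar V) :=
  { S' | ∃ E : V → V → Prop, Equivalence E ∧ CompatibleE S E ∧
      (∀ u v, d u v → ¬ E u v) ∧ QuotBy S E S' }

/-- External fusions of two structures: quotients of the composition of disjoint
isomorphic copies by the smallest equivalence relation containing a nonempty matching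
between supports that is compatible with the composition. -/
def ExtFusion (S1 S2 : Str Rel ar V) : Set (Str Rel ar V) :=
  { S' | ∃ (S1' S2' : Str Rel ar V) (M : Set (V × V)),
      IsoCopy S1 S1' ∧ IsoCopy S2 S2' ∧ S1'.supp ∩ S2'.supp = ∅ ∧
      M.Nonempty ∧ IsMatching M ∧ (∀ p ∈ M, p.1 ∈ S1'.supp ∧ p.2 ∈ S2'.supp) ∧
      CompatibleE (S1'.comp S2') (EqvOf fun a b => (a, b) ∈ M) ∧
      QuotBy (S1'.comp S2') (EqvOf fun a b => (a, b) ∈ M) S' }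

/-- Single-pair external fusions: external fusions whose matching is a single pair. -/
def ExtFusion1 (S1 S2 : Str Rel ar V) : Set (Str Rel ar V) :=
  { S' | ∃ (S1' S2' : Str Rel ar V) (M : Set (V × V)),
      IsoCopy S1 S1' ∧ IsoCopy S2 S2' ∧ S1'.supp ∩ S2'.supp = ∅ ∧
      (∃ p : V × V, M = {p}) ∧ IsMatching M ∧
      (∀ p ∈ M, p.1 ∈ S1'.supp ∧ p.2 ∈ S2'.supp) ∧
      CompatibleE (S1'.comp S2') (EqvOf fun a b => (a, b) ∈ M) ∧
      QuotBy (S1'.comp S2') (EqvOf fun a b => (a, b) ∈ M) S' }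

/-- Closure of a set of structures under external fusions (structures being identified
up to isomorphism). -/
inductive efStar (𝒮 : Set (Str Rel ar V)) : Str Rel ar V → Prop where
  | base {S : Str Rel ar V} : S ∈ 𝒮 → efStar 𝒮 S
  | iso {S S' : Str Rel ar V} : efStar 𝒮 S → IsoCopy S S' → efStar 𝒮 S'
  | fuse {S1 S2 S : Str Rel ar V} :
      efStar 𝒮 S1 → efStar 𝒮 S2 → S ∈ ExtFusion S1 S2 → efStar 𝒮 S

def efStarSet (𝒮 : Set (Str Rel ar V)) : Set (Str Rel ar V) := { S | efStar 𝒮 S }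

/-- Closure of a set of structures under single-pair external fusions. -/
inductive ef1Star (𝒮 : Set (Str Rel ar V)) : Str Rel ar V → Prop where
  | base {S : Str Rel ar V} : S ∈ 𝒮 → ef1Star 𝒮 S
  | iso {S S' : Str Rel ar V} : ef1Star 𝒮 S → IsoCopy S S' → ef1Star 𝒮 S'
  | fuse {S1 S2 S : Str Rel ar V} :
      ef1Star 𝒮 S1 → ef1Star 𝒮 S2 → S ∈ ExtFusion1 S1 S2 → ef1Star 𝒮 S

def ef1StarSet (𝒮 : Set (Str Rel ar V)) : Set (Str Rel ar V) := { S | ef1Star 𝒮 S }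

/-- Closure of a set of structures under both internal and external fusions. -/
inductive iefStar (𝒮 : Set (Str Rel ar V)) : Str Rel ar V → Prop where
  | base {S : Str Rel ar V} : S ∈ 𝒮 → iefStar 𝒮 S
  | iso {S S' : Str Rel ar V} : iefStar 𝒮 S → IsoCopy S S' → iefStar 𝒮 S'
  | fuse {S1 S2 S : Str Rel ar V} :
      iefStar 𝒮 S1 → iefStar 𝒮 S2 → S ∈ ExtFusion S1 S2 → iefStar 𝒮 S
  | intf {S1 S : Str Rel ar V} : iefStar 𝒮 S1 → S ∈ IntFusion S1 → iefStar 𝒮 S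

def iefStarSet (𝒮 : Set (Str Rel ar V)) : Set (Str Rel ar V) := { S | iefStar 𝒮 S }

/-- The color of an element: the set of relation symbols whose interpretation contains
the constant tuple at this element. -/
def color (S : Str Rel ar V) (u : V) : Set Rel :=
  { r : Rel | (fun _ => u) ∈ S.interp r }

/-- The multiplicity of a color in the multiset color abstraction of a structure. -/
noncomputable def colorMult (S : Str Rel ar V) (C : Set Rel) : ℕ :=
  {u ∈ S.supp | color S u = C}.ncard

/-- The `k`-multiset color abstraction of a structure: the sub-multisets of cardinality
at most `k` of the multiset of colors of its support elements. -/
noncomputable def MkOf (k : ℕ) (S : Str Rel ar V) : Set (Multiset (Set Rel)) :=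
  { M | Multiset.card M ≤ k ∧
      ∀ C : Set Rel, @Multiset.count _ (Classical.decEq _) C M ≤ colorMult S C }

/-- The `k`-multiset color abstraction, lifted to sets of structures. -/
noncomputable def MkSet (k : ℕ) (𝒮 : Set (Str Rel ar V)) : Set (Multiset (Set Rel)) :=
  ⋃ S ∈ 𝒮, MkOf k S

/-- A set of structures conforms to an RGB color scheme iff (1) in any member, if some
support element has a red color then all other support elements have blue colors, and
(2) in any external fusion of members, every green color occurs at most twice. -/
def Conforms (𝒮 : Set (Str Rel ar V)) (P : RGB Rel) : Prop :=
  (∀ S ∈ 𝒮, ∀ u ∈ S.supp, color S u ∈ P.red →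
      ∀ v ∈ S.supp, v ≠ u → color S v ∈ P.blue) ∧
  (∀ S ∈ efStarSet 𝒮, ∀ C ∈ P.green, colorMult S C ≤ 2)

/-- Type `R` structures: only blue and red colors, with exactly one red element. -/
def TypeR (P : RGB Rel) (S : Str Rel ar V) : Prop :=
  (∀ u ∈ S.supp, color S u ∈ P.blue ∨ color S u ∈ P.red) ∧
  {u ∈ S.supp | color S u ∈ P.red}.ncard = 1

/-- Type `G` structures: only blue and green colors, with at least one green element. -/
def TypeG (P : RGB Rel) (S : Str Rel ar V) : Prop :=
  (∀ u ∈ S.supp, color S u ∈ P.blue ∨ color S u ∈ P.green) ∧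
  {u ∈ S.supp | color S u ∈ P.green}.Nonempty

/-- Type `B` structures: only blue colors. -/
def TypeB (P : RGB Rel) (S : Str Rel ar V) : Prop :=
  ∀ u ∈ S.supp, color S u ∈ P.blue

namespace SID

/-- The set of predicate symbols occurring in an SID. -/
def predsOf (Δ : SID Rel ar Pr pa) : Set Pr :=
  {A | Δ.rules A ≠ ∅} ∪ ⋃ A, ⋃ φ ∈ Δ.rules A, SLR.preds φ

/-- The set of relation symbols occurring in an SID. -/
def relsOf (Δ : SID Rel ar Pr pa) : Set Rel :=
  ⋃ A, ⋃ φ ∈ Δ.rules A, SLR.rels φ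

/-- The number of predicate symbols occurring in an SID. -/
noncomputable def Pcount (Δ : SID Rel ar Pr pa) : ℕ := Δ.predsOf.ncard

/-- The number of relation symbols occurring in an SID. -/
noncomputable def Rcount (Δ : SID Rel ar Pr pa) : ℕ := Δ.relsOf.ncard

/-- The maximum number of variables (free or existentially quantified) occurring in a
rule of the SID. -/
noncomputable def maxvar (Δ : SID Rel ar Pr pa) : ℕ :=
  sSup { n | ∃ A, ∃ φ ∈ Δ.rules A, n = ({x | x < pa A} ∪ SLR.vars φ).ncard }

/-- The maximum number of predicate atoms occurring in a rule of the SID. -/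
noncomputable def maxpredatoms (Δ : SID Rel ar Pr pa) : ℕ :=
  sSup { n | ∃ A, ∃ φ ∈ Δ.rules A, n = SLR.npred φ }

/-- The maximum number of relation atoms occurring in a rule of the SID. -/
noncomputable def maxrelatoms (Δ : SID Rel ar Pr pa) : ℕ :=
  sSup { n | ∃ A, ∃ φ ∈ Δ.rules A, n = SLR.nrel φ }

/-- The maximum arity of a relation symbol occurring in the SID. -/
noncomputable def maxrelarity (Δ : SID Rel ar Pr pa) : ℕ :=
  sSup { n | ∃ r ∈ Δ.relsOf, n = ar r }

/-- The maximum arity of a predicate symbol occurring in the SID. -/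
noncomputable def maxpredarity (Δ : SID Rel ar Pr pa) : ℕ :=
  sSup { n | ∃ A ∈ Δ.predsOf, n = pa A }

/-- An SID is equality-free iff all its rules are equality-free. -/
def EqFree (Δ : SID Rel ar Pr pa) : Prop :=
  ∀ A, ∀ φ ∈ Δ.rules A, SLR.EqFreeF φ

end SID

/-- An SID is all-satisfiable for a nullary predicate `A` iff every predicate-free
outcome of a complete unfolding of `A` is satisfiable. -/
def AllSat (Δ : SID Rel ar Pr pa) (A : Pr) : Prop :=
  ∀ χ : SLR Rel ar Pr pa, Unfolds Δ (natom A) χ → χ.PredFree →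
    ∃ (S : Str Rel ar V) (s : ℕ → V), Sat Δ S s χ

/-- An SID is expandable for a nullary predicate `A`: any finite family of pairwise
disjoint canonical models embeds, as a substructure, into a rich canonical model, in a
way that neither disequalities nor overlapping tuples connect two distinct members. -/
def Expandable (Δ : SID Rel ar Pr pa) (A : Pr) : Prop :=
  ∀ (n : ℕ) (Ss : Fin n → Str Rel ar V),
    (∀ i, Ss i ∈ Canonical (V := V) Δ (natom A)) →
    (∀ i j, i ≠ j → (Ss i).supp ∩ (Ss j).supp = ∅) →
    ∃ (S : Str Rel ar V) (d : V → V → Prop),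
      RichCanonical Δ (natom A) S d ∧
      Substr (bigComp Ss) S ∧
      (∀ i j : Fin n, i < j → ∀ u ∈ (Ss i).supp, ∀ v ∈ (Ss j).supp, ¬ d u v) ∧
      ¬ ∃ (r : Rel) (t1 t2 : Fin (ar r) → V) (i j : Fin n),
          t1 ∈ S.interp r ∧ t2 ∈ S.interp r ∧ i < j ∧
          (∃ k, t1 k ∈ (Ss i).supp) ∧ (∃ k, t2 k ∈ (Ss j).supp) ∧ ∃ k l, t1 k = t2 l

/-- The set of structures obtained by internal fusion of rich canonical `Δ`-models. -/
def sifSet (Δ : SID Rel ar Pr pa) (φ : SLR Rel ar Pr pa) : Set (Str Rel ar V) :=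
  { S' | ∃ (S : Str Rel ar V) (d : V → V → Prop),
      RichCanonical Δ φ S d ∧ S' ∈ SIntFusion S d }

end Defs2

end SLRTW

/-!
A model of `φ * η` is `strOf φ s` for a store `s` consistent with `φ` that identifies the
common free variables `F` whenever `ψ` forces it. Take any model `s0` of `φ * ψ` and extend
`s` from `F` to a store `B` respecting the equalities entailed by `ψ`. Send the variables of
`ψ`, and those of `φ` whose `s`-value is an `s`-value on `F`, to the pair `(s0 v, s v)` (or
`(s0 v, B v)` outside `φ`), and all other variables to a differently tagged copy of `s v`.
The new store refines `s0` on `ψ` and `s` on `φ` and respects all equality atoms, so it is a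
model of `φ * ψ`; the two parts stay locally disjoint because a shared tuple would already be
shared under `s0`. Forgetting the `s0`-component maps its `φ`-part onto `strOf φ s`,
identifying elements only inside `s '' F`, so adding `s '' F` to every bag of a tree
decomposition of the model of `φ * ψ` yields one of `strOf φ s`.
-/

namespace SLRTW

section QPF

variable {Rel : Type} {ar : Rel → ℕ} {V : Type} {Pr : Type} {pa : Pr → ℕ}

theorem Str.ext {S1 S2 : Str Rel ar V} (h : ∀ r, S1.interp r = S2.interp r) : S1 = S2 := by
  cases S1; cases S2
  simp only [Str.mk.injEq]
  exact funext h

def emptyStr : Str Rel ar V where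
  interp _ := ∅
  finite_interp _ := Set.finite_empty
  finite_active := by simp

def atomStr (r : Rel) (t : Fin (ar r) → V) : Str Rel ar V where
  interp r' := {t' | ∃ _ : r = r', HEq t' t}
  finite_interp r' := by
    apply Set.Subsingleton.finite
    rintro a ⟨rfl, ha⟩ b ⟨-, hb⟩
    rw [eq_of_heq ha, eq_of_heq hb]
  finite_active := by
    refine (Set.finite_singleton r).subset fun r' hr' => ?_
    by_contra hne
    exact hr' (Set.eq_empty_of_forall_notMem fun _ ⟨h, _⟩ => hne h.symm)

theorem atomStr_interp_self (r : Rel) (t : Fin (ar r) → V) : (atomStr r t).interp r = {t} := by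
  ext t'
  exact ⟨fun ⟨_, h⟩ => eq_of_heq h, fun h => ⟨rfl, heq_of_eq h⟩⟩

theorem atomStr_interp_of_ne {r r' : Rel} (h : r ≠ r') (t : Fin (ar r) → V) :
    (atomStr r t).interp r' = ∅ :=
  Set.eq_empty_of_forall_notMem fun _ ⟨h', _⟩ => h h'

/-- The unique structure that can satisfy a qpf formula under the store `s`. -/
def strOf : SLR Rel ar Pr pa → (ℕ → V) → Str Rel ar V
  | .rel r a, s => atomStr r (fun i => s (a i))
  | .star χ1 χ2, s => (strOf χ1 s).comp (strOf χ2 s)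
  | _, _ => emptyStr

def Consistent : SLR Rel ar Pr pa → (ℕ → V) → Prop
  | .emp, _ => True
  | .eq x y, s => s x = s y
  | .ne x y, s => s x ≠ s y
  | .rel _ _, _ => True
  | .pred _ _, _ => False
  | .star χ1 χ2, s => Consistent χ1 s ∧ Consistent χ2 s ∧ LocDisj (strOf χ1 s) (strOf χ2 s)
  | .ex _ _, _ => False

theorem sat_iff_eq_strOf {Δ : SID Rel ar Pr pa} {χ : SLR Rel ar Pr pa} {S : Str Rel ar V}
    {s : ℕ → V} (hχ : χ.QPF) : Sat Δ S s χ ↔ S = strOf χ s ∧ Consistent χ s := by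
  induction χ generalizing S with
  | emp =>
    refine ⟨fun h => ?_, ?_⟩
    · cases h with | emp he => exact ⟨Str.ext he, trivial⟩
    · rintro ⟨rfl, -⟩
      exact .emp fun _ => rfl
  | eq x y =>
    refine ⟨fun h => ?_, ?_⟩
    · cases h with | eq he hxy => exact ⟨Str.ext he, hxy⟩
    · rintro ⟨rfl, h⟩
      exact .eq (fun _ => rfl) h
  | ne x y =>
    refine ⟨fun h => ?_, ?_⟩
    · cases h with | ne he hxy => exact ⟨Str.ext he, hxy⟩
    · rintro ⟨rfl, h⟩
      exact .ne (fun _ => rfl) h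
  | rel r a =>
    refine ⟨fun h => ?_, ?_⟩
    · cases h with | rel h1 h2 =>
        refine ⟨Str.ext fun r' => ?_, trivial⟩
        by_cases hr : r' = r
        · subst hr
          exact h1.trans (atomStr_interp_self r' _).symm
        · exact (h2 r' hr).trans (atomStr_interp_of_ne (Ne.symm hr) _).symm
    · rintro ⟨rfl, -⟩
      exact .rel (atomStr_interp_self r _) fun r' hr' => atomStr_interp_of_ne (Ne.symm hr') _
  | star χ1 χ2 ih1 ih2 =>
    constructor
    · intro h
      cases h with | star hd h1 h2 =>
        obtain ⟨rfl, c1⟩ := (ih1 hχ.1).mp h1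
        obtain ⟨rfl, c2⟩ := (ih2 hχ.2).mp h2
        exact ⟨rfl, c1, c2, hd⟩
    · rintro ⟨rfl, c1, c2, hd⟩
      exact .star hd ((ih1 hχ.1).mpr ⟨rfl, c1⟩) ((ih2 hχ.2).mpr ⟨rfl, c2⟩)
  | pred | ex => exact hχ.elim

theorem exists_atom_of_mem_strOf {s : ℕ → V} {r : Rel} {t : Fin (ar r) → V}
    {χ : SLR Rel ar Pr pa} (ht : t ∈ (strOf χ s).interp r) :
    ∃ a : Fin (ar r) → ℕ, (∀ i, a i ∈ χ.fv) ∧ t = (fun i => s (a i)) ∧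
      ∀ s' : ℕ → V, (fun i => s' (a i)) ∈ (strOf χ s').interp r := by
  induction χ with
  | rel r' a' =>
    obtain ⟨rfl, h⟩ := ht
    exact ⟨a', Set.mem_range_self, eq_of_heq h, fun _ => ⟨rfl, HEq.rfl⟩⟩
  | star χ1 χ2 ih1 ih2 =>
    rcases ht with ht | ht
    · obtain ⟨a, hfv, rfl, hmem⟩ := ih1 ht
      exact ⟨a, fun i => Or.inl (hfv i), rfl, fun s' => Or.inl (hmem s')⟩
    · obtain ⟨a, hfv, rfl, hmem⟩ := ih2 ht
      exact ⟨a, fun i => Or.inr (hfv i), rfl, fun s' => Or.inr (hmem s')⟩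
  | _ => exact ht.elim

theorem strOf_congr {s1 s2 : ℕ → V} {χ : SLR Rel ar Pr pa} (h : Set.EqOn s1 s2 χ.fv) :
    strOf χ s1 = strOf χ s2 := by
  induction χ with
  | rel r a => exact congrArg (atomStr r) (funext fun i => h (Set.mem_range_self i))
  | star χ1 χ2 ih1 ih2 =>
    exact congrArg₂ Str.comp (ih1 (h.mono Set.subset_union_left))
      (ih2 (h.mono Set.subset_union_right))
  | _ => rfl

theorem mapStr_strOf (g : V → V) (χ : SLR Rel ar Pr pa) (s : ℕ → V) :
    mapStr g (strOf χ s) = strOf χ (g ∘ s) := by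
  induction χ with
  | rel r a =>
    refine Str.ext fun r' => ?_
    by_cases hr : r = r'
    · subst hr
      simp only [strOf, mapStr, atomStr_interp_self, Set.image_singleton]
      rfl
    · simp only [strOf, mapStr, atomStr_interp_of_ne hr, Set.image_empty]
  | star χ1 χ2 ih1 ih2 =>
    rw [strOf, strOf, ← ih1, ← ih2]
    exact Str.ext fun r => Set.image_union _ _ _
  | _ => exact Str.ext fun r => Set.image_empty _

end QPF

section Equalities

variable {Rel : Type} {ar : Rel → ℕ} {V : Type} {Pr : Type} {pa : Pr → ℕ}

theorem SLR.fv_finite (χ : SLR Rel ar Pr pa) : χ.fv.Finite := by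
  induction χ with
  | emp => exact Set.finite_empty
  | eq x y | ne x y => exact (Set.finite_singleton y).insert x
  | rel _ a | pred _ a => exact Set.finite_range a
  | star _ _ ih1 ih2 => exact ih1.union ih2
  | ex _ _ ih => exact ih.sdiff

theorem Consistent.eq_of_eqOccurs {χ : SLR Rel ar Pr pa} {s : ℕ → V} (h : Consistent χ s)
    {x y : ℕ} (he : χ.eqOccurs x y) : s x = s y := by
  induction χ with
  | eq a b =>
    rcases he with ⟨rfl, rfl⟩ | ⟨rfl, rfl⟩
    exacts [h, h.symm]
  | star χ1 χ2 ih1 ih2 => exact he.elim (ih1 h.1) (ih2 h.2.1)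
  | pred | ex => exact h.elim
  | _ => exact he.elim

theorem mem_fv_of_eqOccurs {χ : SLR Rel ar Pr pa} (hχ : χ.QPF) {x y : ℕ}
    (he : χ.eqOccurs x y) : x ∈ χ.fv ∧ y ∈ χ.fv := by
  induction χ with
  | eq a b =>
    rcases he with ⟨rfl, rfl⟩ | ⟨rfl, rfl⟩ <;> simp [SLR.fv]
  | star χ1 χ2 ih1 ih2 =>
    rcases he with he | he
    · exact (ih1 hχ.1 he).imp Or.inl Or.inl
    · exact (ih2 hχ.2 he).imp Or.inr Or.inr
  | pred | ex => exact hχ.elim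
  | _ => exact he.elim

theorem eqConseq_of_eqOccurs {Δ : SID Rel ar Pr pa} {χ : SLR Rel ar Pr pa} (hχ : χ.QPF)
    {x y : ℕ} (he : χ.eqOccurs x y) : EqConseq (V := V) Δ χ x y :=
  fun _ _ h => ((sat_iff_eq_strOf hχ).mp h).2.eq_of_eqOccurs he

theorem EqConseq.equivalence (Δ : SID Rel ar Pr pa) (χ : SLR Rel ar Pr pa) :
    Equivalence (EqConseq (V := V) Δ χ) where
  refl _ _ _ _ := rfl
  symm h S s hs := (h S s hs).symm
  trans h1 h2 S s hs := (h1 S s hs).trans (h2 S s hs)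

theorem sat_of_eqOnly {Δ : SID Rel ar Pr pa} {χ : SLR Rel ar Pr pa} {S : Str Rel ar V}
    {s : ℕ → V} (hχ : χ.EqOnly) (h : Sat Δ S s χ) :
    EmpS S ∧ ∀ x y, χ.eqOccurs x y → s x = s y := by
  induction χ generalizing S with
  | emp => cases h with | emp he => exact ⟨he, fun _ _ => False.elim⟩
  | eq a b =>
    cases h with | eq he hab =>
      refine ⟨he, fun x y hxy => ?_⟩
      rcases hxy with ⟨rfl, rfl⟩ | ⟨rfl, rfl⟩
      exacts [hab, hab.symm]
  | star χ1 χ2 ih1 ih2 =>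
    cases h with | star _ h1 h2 =>
      obtain ⟨e1, f1⟩ := ih1 hχ.1 h1
      obtain ⟨e2, f2⟩ := ih2 hχ.2 h2
      refine ⟨fun r => ?_, fun x y hxy => hxy.elim (f1 x y) (f2 x y)⟩
      change _ ∪ _ = _
      rw [e1 r, e2 r, Set.union_empty]
  | _ => exact hχ.elim

theorem Consistent.of_factorsThrough {χ : SLR Rel ar Pr pa} {s1 s2 : ℕ → V} (hχ : χ.QPF)
    (h : Consistent χ s1) (hfac : ∀ x ∈ χ.fv, ∀ y ∈ χ.fv, s2 x = s2 y → s1 x = s1 y)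
    (heq : ∀ x y, χ.eqOccurs x y → s2 x = s2 y) : Consistent χ s2 := by
  induction χ with
  | emp | rel => trivial
  | eq x y => exact heq x y (Or.inl ⟨rfl, rfl⟩)
  | ne x y => exact fun hxy => h (hfac x (by simp [SLR.fv]) y (by simp [SLR.fv]) hxy)
  | star χ1 χ2 ih1 ih2 =>
    refine ⟨ih1 hχ.1 h.1 (fun x hx y hy => hfac x (Or.inl hx) y (Or.inl hy))
        (fun x y he => heq x y (Or.inl he)),
      ih2 hχ.2 h.2.1 (fun x hx y hy => hfac x (Or.inr hx) y (Or.inr hy))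
        (fun x y he => heq x y (Or.inr he)), ?_⟩
    -- `g` sends `s2 x` to `s1 x`, so a tuple shared under `s2` would be shared under `s1`
    let g : V → V := Function.extend (fun x : (SLR.star χ1 χ2).fv => s2 x)
      (fun x => s1 x) id
    have hg : ∀ x ∈ (SLR.star χ1 χ2).fv, g (s2 x) = s1 x := fun x hx =>
      Function.FactorsThrough.extend_apply (f := fun x : (SLR.star χ1 χ2).fv => s2 x)
        (fun a b hab => hfac a a.2 b b.2 hab) id ⟨x, hx⟩
    have e1 : strOf χ1 s1 = mapStr g (strOf χ1 s2) := by
      rw [mapStr_strOf]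
      exact strOf_congr fun x hx => (hg x (Or.inl hx)).symm
    have e2 : strOf χ2 s1 = mapStr g (strOf χ2 s2) := by
      rw [mapStr_strOf]
      exact strOf_congr fun x hx => (hg x (Or.inr hx)).symm
    intro r
    refine Set.eq_empty_of_forall_notMem fun t ⟨ht1, ht2⟩ => ?_
    have hd := h.2.2 r
    rw [e1, e2] at hd
    exact Set.eq_empty_iff_forall_notMem.mp hd (g ∘ t) ⟨⟨t, ht1, rfl⟩, ⟨t, ht2, rfl⟩⟩
  | pred | ex => exact hχ.elim

theorem exists_eqOn_of_respects {α β : Type} [Nonempty β] {R : α → α → Prop}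
    (hR : Equivalence R) {F : Set α} {f : α → β}
    (hf : ∀ u ∈ F, ∀ v ∈ F, R u v → f u = f v) :
    ∃ g : α → β, Set.EqOn g f F ∧ ∀ x y, R x y → g x = g y := by
  classical
  let g : α → β := fun v =>
    if h : ∃ u ∈ F, R u v then f h.choose else Classical.arbitrary β
  have g_of_rel : ∀ u ∈ F, ∀ v, R u v → g v = f u := fun u hu v huv => by
    have h : ∃ u ∈ F, R u v := ⟨u, hu, huv⟩
    simp only [g, dif_pos h]
    exact hf _ h.choose_spec.1 u hu (hR.trans h.choose_spec.2 (hR.symm huv))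
  refine ⟨g, fun v hv => g_of_rel v hv v (hR.refl v), fun x y hxy => ?_⟩
  by_cases hx : ∃ u ∈ F, R u x
  · obtain ⟨u, hu, hux⟩ := hx
    rw [g_of_rel u hu x hux, g_of_rel u hu y (hR.trans hux hxy)]
  · have hy : ¬ ∃ u ∈ F, R u y := fun ⟨u, hu, huy⟩ =>
      hx ⟨u, hu, hR.trans huy (hR.symm hxy)⟩
    simp only [g, dif_neg hx, dif_neg hy]

end Equalities

section Treewidth

variable {Rel : Type} {ar : Rel → ℕ} {V : Type} {Pr : Type} {pa : Pr → ℕ}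

theorem Str.supp_finite (S : Str Rel ar V) : S.supp.Finite := by
  refine (S.finite_active.biUnion fun r _ =>
    (S.finite_interp r).biUnion fun t _ => Set.finite_range t).subset ?_
  rintro u ⟨r, t, ht, i, rfl⟩
  exact Set.mem_biUnion (Set.nonempty_iff_ne_empty.mp ⟨t, ht⟩)
    (Set.mem_biUnion ht ⟨i, rfl⟩)

theorem Str.supp_mono {S1 S2 : Str Rel ar V} (h : ∀ r, S1.interp r ⊆ S2.interp r) :
    S1.supp ⊆ S2.supp := fun _ ⟨r, t, ht, hu⟩ => ⟨r, t, h r ht, hu⟩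

theorem supp_mapStr_subset (g : V → V) (S : Str Rel ar V) :
    (mapStr g S).supp ⊆ g '' S.supp := by
  rintro _ ⟨r, _, ⟨t, ht, rfl⟩, i, rfl⟩
  exact ⟨t i, ⟨r, t, ht, i, rfl⟩, rfl⟩

theorem supp_strOf_subset (χ : SLR Rel ar Pr pa) (s : ℕ → V) :
    (strOf χ s).supp ⊆ s '' χ.fv := by
  rintro _ ⟨r, t, ht, i, rfl⟩
  obtain ⟨a, hfv, rfl, -⟩ := exists_atom_of_mem_strOf ht
  exact ⟨a i, hfv i, rfl⟩

noncomputable def TreeDecomp.single (S : Str Rel ar V) : TreeDecomp S where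
  ι := PUnit
  instFin := inferInstance
  G := ⊥
  isTree := .of_subsingleton
  bag _ := S.supp_finite.toFinset
  bag_cover r t ht := ⟨PUnit.unit, fun i => S.supp_finite.mem_toFinset.mpr ⟨r, t, ht, i, rfl⟩⟩
  bag_conn u hu :=
    haveI : Nonempty {_n : PUnit | u ∈ S.supp_finite.toFinset} :=
      ⟨⟨PUnit.unit, S.supp_finite.mem_toFinset.mpr hu⟩⟩
    .of_subsingleton

theorem tw_le_width {S : Str Rel ar V} (T : TreeDecomp S) : tw S ≤ T.width :=
  Nat.sInf_le ⟨T, rfl⟩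

theorem exists_treeDecomp_width_eq_tw (S : Str Rel ar V) : ∃ T : TreeDecomp S, T.width = tw S :=
  Nat.sInf_mem (s := {w | ∃ T : TreeDecomp S, T.width = w}) ⟨_, TreeDecomp.single S, rfl⟩

def TreeDecomp.ofLE {S1 S2 : Str Rel ar V} (T : TreeDecomp S2)
    (h : ∀ r, S1.interp r ⊆ S2.interp r) : TreeDecomp S1 where
  __ := T
  bag_cover r t ht := T.bag_cover r t (h r ht)
  bag_conn u hu := T.bag_conn u (Str.supp_mono h hu)

theorem tw_le_of_interp_subset {S1 S2 : Str Rel ar V} (h : ∀ r, S1.interp r ⊆ S2.interp r) :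
    tw S1 ≤ tw S2 := by
  obtain ⟨T, hT⟩ := exists_treeDecomp_width_eq_tw S2
  exact hT ▸ tw_le_width (T.ofLE h)

noncomputable def TreeDecomp.map [DecidableEq V] {S : Str Rel ar V} (T : TreeDecomp S)
    (g : V → V) {K : Set V} (hK : K.Finite) (hg : ∀ u ∈ S.supp, ∀ v ∈ S.supp, g u = g v → g u ∉ K → u = v) :
    TreeDecomp (mapStr g S) :=
  { ι := T.ι
    instFin := T.instFin
    G := T.G
    isTree := T.isTree
    bag := fun n => (T.bag n ∩ S.supp_finite.toFinset).image g ∪ hK.toFinset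
    bag_cover := by
      rintro r _ ⟨t, ht, rfl⟩
      obtain ⟨n, hn⟩ := T.bag_cover r t ht
      exact ⟨n, fun i => Finset.mem_union_left _ (Finset.mem_image_of_mem g
        (Finset.mem_inter.mpr ⟨hn i, S.supp_finite.mem_toFinset.mpr ⟨r, t, ht, i, rfl⟩⟩))⟩
    bag_conn := by
      intro w hw
      obtain ⟨u, hu, rfl⟩ := supp_mapStr_subset g S hw
      by_cases huK : g u ∈ K
      · have huniv : {n | g u ∈ (T.bag n ∩ S.supp_finite.toFinset).image g ∪ hK.toFinset} =
            Set.univ :=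
          Set.eq_univ_of_forall fun n => Finset.mem_union_right _ (hK.mem_toFinset.mpr huK)
        rw [huniv]
        exact (SimpleGraph.induceUnivIso T.G).connected_iff.mpr T.isTree.connected
      · have hset : {n | g u ∈ (T.bag n ∩ S.supp_finite.toFinset).image g ∪ hK.toFinset} =
            {n | u ∈ T.bag n} := by
          ext n
          simp only [Set.mem_ofPred_eq, Finset.mem_union, Finset.mem_image, Finset.mem_inter,
            Set.Finite.mem_toFinset, huK, or_false]
          constructor
          · rintro ⟨v, ⟨hvn, hv⟩, hvu⟩
            rwa [← hg v hv u hu hvu (hvu ▸ huK)]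
          · exact fun hn => ⟨u, ⟨hn, hu⟩, rfl⟩
        rw [hset]
        exact T.bag_conn u hu }

theorem TreeDecomp.width_map_le [DecidableEq V] {S : Str Rel ar V} (T : TreeDecomp S) (g : V → V) {K : Set V}
    (hK : K.Finite) (hg : ∀ u ∈ S.supp, ∀ v ∈ S.supp, g u = g v → g u ∉ K → u = v) :
    (T.map g hK hg).width ≤ T.width + K.ncard := by
  have hbag : ∀ n, ((T.bag n ∩ S.supp_finite.toFinset).image g ∪ hK.toFinset).card ≤
      (T.bag n).card + K.ncard := fun n =>
    calc _ ≤ ((T.bag n ∩ S.supp_finite.toFinset).image g).card + hK.toFinset.card :=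
          Finset.card_union_le _ _
      _ ≤ (T.bag n).card + K.ncard := by
          rw [← Set.ncard_eq_toFinset_card K hK]
          gcongr ?_ + _
          exact Finset.card_image_le.trans (Finset.card_le_card Finset.inter_subset_left)
  have hsup : (Finset.univ.sup fun n => ((T.bag n ∩ S.supp_finite.toFinset).image g ∪
      hK.toFinset).card) ≤ (Finset.univ.sup fun n => (T.bag n).card) + K.ncard :=
    Finset.sup_le fun n _ => (hbag n).trans <| Nat.add_le_add_right
      (Finset.le_sup (f := fun n => (T.bag n).card) (Finset.mem_univ n)) _
  unfold TreeDecomp.width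
  exact (Nat.sub_le_sub_right hsup 1).trans (by omega)

theorem tw_mapStr_le {S : Str Rel ar V} (g : V → V) {K : Set V} (hK : K.Finite)
    (hg : ∀ u ∈ S.supp, ∀ v ∈ S.supp, g u = g v → g u ∉ K → u = v) :
    tw (mapStr g S) ≤ tw S + K.ncard := by
  classical
  obtain ⟨T, hT⟩ := exists_treeDecomp_width_eq_tw S
  exact (tw_le_width (T.map g hK hg)).trans (hT ▸ T.width_map_le g hK hg)

end Treewidth

section LiftStore

variable {Rel : Type} {ar : Rel → ℕ} {V : Type} {Pr : Type} {pa : Pr → ℕ}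
  (e : (V × V) ⊕ V ≃ V) (φ ψ : SLR Rel ar Pr pa) (s0 s B : ℕ → V)

/-- The variables whose lifted value records the model `s0` of `ψ`. -/
def Anchored (v : ℕ) : Prop :=
  v ∈ ψ.fv ∨ s v ∈ s '' (φ.fv ∩ ψ.fv)

open Classical in
/-- `e` tags the values of anchored and of free-floating variables differently, so that the
two kinds never collide. -/
noncomputable def liftStore (v : ℕ) : V :=
  e (if Anchored φ ψ s v then .inl (s0 v, if v ∈ φ.fv then s v else B v) else .inr (s v))

def unlift (w : V) : V :=
  (e.symm w).elim Prod.snd id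

variable {φ ψ s0 s B}

theorem anchored_iff_of_mem_fv {x : ℕ} (hx : x ∈ φ.fv) :
    Anchored φ ψ s x ↔ s x ∈ s '' (φ.fv ∩ ψ.fv) :=
  or_iff_right_of_imp fun hxψ => ⟨x, ⟨hx, hxψ⟩, rfl⟩

theorem liftStore_of_anchored {v : ℕ} (hv : Anchored φ ψ s v) (hvφ : v ∈ φ.fv) :
    liftStore e φ ψ s0 s B v = e (.inl (s0 v, s v)) := by
  classical
  simp only [liftStore, if_pos hv, if_pos hvφ]

theorem liftStore_of_mem_fv_right (hBs : Set.EqOn B s (φ.fv ∩ ψ.fv)) {v : ℕ} (hv : v ∈ ψ.fv) :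
    liftStore e φ ψ s0 s B v = e (.inl (s0 v, B v)) := by
  classical
  have hva : Anchored φ ψ s v := Or.inl hv
  by_cases hvφ : v ∈ φ.fv
  · simp only [liftStore, if_pos hva, if_pos hvφ, hBs ⟨hvφ, hv⟩]
  · simp only [liftStore, if_pos hva, if_neg hvφ]

theorem exists_liftStore_eq_inl {v : ℕ} (hv : Anchored φ ψ s v) :
    ∃ w, liftStore e φ ψ s0 s B v = e (.inl (s0 v, w)) := by
  classical
  simp only [liftStore, if_pos hv]
  exact ⟨_, rfl⟩

theorem liftStore_of_not_anchored {v : ℕ} (hv : ¬ Anchored φ ψ s v) :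
    liftStore e φ ψ s0 s B v = e (.inr (s v)) := by
  classical
  simp only [liftStore, if_neg hv]

theorem unlift_liftStore {x : ℕ} (hx : x ∈ φ.fv) :
    unlift e (liftStore e φ ψ s0 s B x) = s x := by
  by_cases hxa : Anchored φ ψ s x
  · simp [unlift, liftStore_of_anchored e hxa hx]
  · simp [unlift, liftStore_of_not_anchored e hxa]

theorem liftStore_eq_of_not_mem_image {x y : ℕ} (hx : x ∈ φ.fv) (hy : y ∈ φ.fv)
    (hxy : s x = s y) (hxF : s x ∉ s '' (φ.fv ∩ ψ.fv)) :
    liftStore e φ ψ s0 s B x = liftStore e φ ψ s0 s B y := by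
  rw [liftStore_of_not_anchored e ((anchored_iff_of_mem_fv hx).not.mpr hxF),
    liftStore_of_not_anchored e ((anchored_iff_of_mem_fv hy).not.mpr (hxy ▸ hxF)), hxy]

theorem eq_of_unlift_eq {u v : V} (hu : u ∈ (strOf φ (liftStore e φ ψ s0 s B)).supp)
    (hv : v ∈ (strOf φ (liftStore e φ ψ s0 s B)).supp) (huv : unlift e u = unlift e v)
    (huF : unlift e u ∉ s '' (φ.fv ∩ ψ.fv)) : u = v := by
  obtain ⟨x, hx, rfl⟩ := supp_strOf_subset φ _ hu
  obtain ⟨y, hy, rfl⟩ := supp_strOf_subset φ _ hv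
  rw [unlift_liftStore e hx, unlift_liftStore e hy] at huv
  rw [unlift_liftStore e hx] at huF
  exact liftStore_eq_of_not_mem_image e hx hy huv huF

theorem consistent_liftStore_left (hφ : φ.QPF) (h0 : Consistent φ s0) (hs : Consistent φ s) :
    Consistent φ (liftStore e φ ψ s0 s B) := by
  refine hs.of_factorsThrough hφ (fun x hx y hy hxy => ?_) fun x y he => ?_
  · simpa only [unlift_liftStore e hx, unlift_liftStore e hy] using congrArg (unlift e) hxy
  · obtain ⟨hx, hy⟩ := mem_fv_of_eqOccurs hφ he
    have hsxy := hs.eq_of_eqOccurs he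
    by_cases hxa : Anchored φ ψ s x
    · have hya : Anchored φ ψ s y :=
        (anchored_iff_of_mem_fv hy).mpr (hsxy ▸ (anchored_iff_of_mem_fv hx).mp hxa)
      rw [liftStore_of_anchored e hxa hx, liftStore_of_anchored e hya hy,
        h0.eq_of_eqOccurs he, hsxy]
    · exact liftStore_eq_of_not_mem_image e hx hy hsxy ((anchored_iff_of_mem_fv hx).not.mp hxa)

theorem consistent_liftStore_right (hψ : ψ.QPF) (h0 : Consistent ψ s0)
    (hB : ∀ x y, ψ.eqOccurs x y → B x = B y) (hBs : Set.EqOn B s (φ.fv ∩ ψ.fv)) :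
    Consistent ψ (liftStore e φ ψ s0 s B) := by
  refine h0.of_factorsThrough hψ (fun x hx y hy hxy => ?_) fun x y he => ?_
  · rw [liftStore_of_mem_fv_right e hBs hx, liftStore_of_mem_fv_right e hBs hy] at hxy
    simpa using (Prod.ext_iff.mp (Sum.inl_injective (e.injective hxy))).1
  · obtain ⟨hx, hy⟩ := mem_fv_of_eqOccurs hψ he
    rw [liftStore_of_mem_fv_right e hBs hx, liftStore_of_mem_fv_right e hBs hy,
      h0.eq_of_eqOccurs he, hB x y he]

theorem locDisj_liftStore (hd : LocDisj (strOf φ s0) (strOf ψ s0)) :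
    LocDisj (strOf φ (liftStore e φ ψ s0 s B)) (strOf ψ (liftStore e φ ψ s0 s B)) := by
  intro r
  refine Set.eq_empty_of_forall_notMem fun t ⟨ht1, ht2⟩ => ?_
  obtain ⟨a, -, rfl, ha⟩ := exists_atom_of_mem_strOf ht1
  obtain ⟨b, hb, hab, hb'⟩ := exists_atom_of_mem_strOf ht2
  -- every position of the shared tuple is anchored, since the `ψ`-side ones are
  have hs0 : ∀ i, s0 (a i) = s0 (b i) := fun i => by
    have hi := congrFun hab i
    obtain ⟨wb, hwb⟩ := exists_liftStore_eq_inl e (s0 := s0) (B := B) (Or.inl (hb i))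
    rw [hwb] at hi
    by_cases hai : Anchored φ ψ s (a i)
    · obtain ⟨wa, hwa⟩ := exists_liftStore_eq_inl e (s0 := s0) (B := B) hai
      rw [hwa] at hi
      simpa using congrArg Prod.fst (Sum.inl_injective (e.injective hi))
    · rw [liftStore_of_not_anchored e hai] at hi
      simp at hi
  refine Set.eq_empty_iff_forall_notMem.mp (hd r) (fun i => s0 (a i)) ⟨ha s0, ?_⟩
  simpa only [hs0] using hb' s0

end LiftStore

section Main

variable {Rel : Type} {ar : Rel → ℕ} {V : Type} {Pr : Type} {pa : Pr → ℕ}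

theorem nonempty_prod_sum_equiv (V : Type) [Infinite V] : Nonempty ((V × V) ⊕ V ≃ V) :=
  Cardinal.eq.mp <| by
    simp [Cardinal.mul_eq_self (Cardinal.aleph0_le_mk V),
      Cardinal.add_eq_self (Cardinal.aleph0_le_mk V)]

theorem tw_le_twSet {𝒮 : Set (Str Rel ar V)} {S : Str Rel ar V} (h : S ∈ 𝒮) :
    (tw S : ℕ∞) ≤ twSet 𝒮 :=
  le_iSup₂ (f := fun S (_ : S ∈ 𝒮) => (tw S : ℕ∞)) S h

theorem twSet_le {𝒮 : Set (Str Rel ar V)} {c : ℕ∞} (h : ∀ S ∈ 𝒮, (tw S : ℕ∞) ≤ c) :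
    twSet 𝒮 ≤ c :=
  iSup₂_le h

theorem exists_sat_star_tw_le [Infinite V] {Δ : SID Rel ar Pr pa} {φ ψ : SLR Rel ar Pr pa}
    (hφ : φ.QPF) (hψ : ψ.QPF) {s0 s : ℕ → V} (h0 : Consistent (.star φ ψ) s0)
    (hs : Consistent φ s)
    (hη : ∀ u ∈ φ.fv ∩ ψ.fv, ∀ v ∈ φ.fv ∩ ψ.fv, EqConseq (V := V) Δ ψ u v → s u = s v) :
    ∃ t : ℕ → V, Sat Δ (strOf (.star φ ψ) t) t (.star φ ψ) ∧
      tw (strOf φ s) ≤ tw (strOf (.star φ ψ) t) + (φ.fv ∩ ψ.fv).ncard := by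
  obtain ⟨e⟩ := nonempty_prod_sum_equiv V
  obtain ⟨B, hBs, hB⟩ := exists_eqOn_of_respects (EqConseq.equivalence Δ ψ) hη
  let t := liftStore e φ ψ s0 s B
  refine ⟨t, (sat_iff_eq_strOf (χ := .star φ ψ) ⟨hφ, hψ⟩).mpr ⟨rfl, consistent_liftStore_left e hφ h0.1 hs,
    consistent_liftStore_right e hψ h0.2.1 (fun x y he => hB x y (eqConseq_of_eqOccurs hψ he))
      hBs, locDisj_liftStore e h0.2.2⟩, ?_⟩
  have hmap : strOf φ s = mapStr (unlift e) (strOf φ t) := by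
    rw [mapStr_strOf]
    exact strOf_congr fun x hx => (unlift_liftStore e hx).symm
  have hF : (φ.fv ∩ ψ.fv).Finite := φ.fv_finite.inter_of_left _
  calc tw (strOf φ s) ≤ tw (strOf φ t) + (s '' (φ.fv ∩ ψ.fv)).ncard :=
        hmap ▸ tw_mapStr_le (unlift e) (hF.image s) fun _ hu _ hv => eq_of_unlift_eq e hu hv
    _ ≤ tw (strOf (.star φ ψ) t) + (φ.fv ∩ ψ.fv).ncard :=
        add_le_add (tw_le_of_interp_subset fun _ => Set.subset_union_left)
          (Set.ncard_image_le hF)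

end Main

theorem sep_treewidth_general
    (Rel : Type) (ar : Rel → ℕ)
    (V : Type) [Infinite V] (Pr : Type) (pa : Pr → ℕ) (Δ : SID Rel ar Pr pa)
    (φ ψ η : SLR Rel ar Pr pa) (hφ : φ.QPF) (hψ : ψ.QPF)
    (hsat : ∃ (S : Str Rel ar V) (s : ℕ → V), Sat Δ S s (.star φ ψ))
    (hη1 : η.EqOnly)
    (hη2 : ∀ x y : ℕ, η.eqOccurs x y ↔
      (x ∈ φ.fv ∩ ψ.fv ∧ y ∈ φ.fv ∩ ψ.fv ∧ EqConseq (V := V) Δ ψ x y)) :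
    twSet (SMod (V := V) Δ (.star φ η)) ≤
      twSet (SMod (V := V) Δ (.star φ ψ)) + (((φ.fv ∩ ψ.fv).ncard : ℕ) : ℕ∞) := by
  obtain ⟨_, s0, h0⟩ := hsat
  refine twSet_le fun S ⟨s, hS⟩ => ?_
  cases hS with | star _ hφs hηs =>
  obtain ⟨rfl, hs⟩ := (sat_iff_eq_strOf hφ).mp hφs
  obtain ⟨hemp, hηeq⟩ := sat_of_eqOnly hη1 hηs
  obtain ⟨t, ht, htw⟩ := exists_sat_star_tw_le hφ hψ ((sat_iff_eq_strOf (χ := .star φ ψ) ⟨hφ, hψ⟩).mp h0).2 hs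
    fun u hu v hv huv => hηeq u v ((hη2 u v).mpr ⟨hu, hv, huv⟩)
  have hS : (strOf φ s).comp _ = strOf φ s :=
    Str.ext fun r => (congrArg _ (hemp r)).trans (Set.union_empty _)
  rw [hS]
  calc (tw (strOf φ s) : ℕ∞) ≤ tw (strOf (.star φ ψ) t) + (φ.fv ∩ ψ.fv).ncard := by
        exact_mod_cast htw
    _ ≤ _ := add_le_add_left (tw_le_twSet (𝒮 := SMod Δ (.star φ ψ)) ⟨t, ht⟩) _

/-- Lemma 2.11: replacing `ψ` by the conjunction `η` of the equalities
between common free variables entailed by `ψ` increases the treewidth of the models of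
the existential closure by at most the number of common free variables. -/
theorem sep_treewidth
    (Rel : Type) [Fintype Rel] (ar : Rel → ℕ) (har : ∀ r, 1 ≤ ar r)
    (V : Type) [Infinite V] (Pr : Type) (pa : Pr → ℕ) (Δ : SID Rel ar Pr pa)
    (φ ψ η : SLR Rel ar Pr pa) (hφ : φ.QPF) (hψ : ψ.QPF)
    (hsat : ∃ (S : Str Rel ar V) (s : ℕ → V), Sat Δ S s (.star φ ψ))
    (hnc : ∀ x ∈ φ.fv ∩ ψ.fv, ∀ y ∈ φ.fv ∩ ψ.fv, x ≠ y → ¬ EqConseq (V := V) Δ φ x y)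
    (hη1 : η.EqOnly)
    (hη2 : ∀ x y : ℕ, η.eqOccurs x y ↔
      (x ∈ φ.fv ∩ ψ.fv ∧ y ∈ φ.fv ∩ ψ.fv ∧ EqConseq (V := V) Δ ψ x y)) :
    twSet (SMod (V := V) Δ (.star φ η)) ≤
      twSet (SMod (V := V) Δ (.star φ ψ)) + (((φ.fv ∩ ψ.fv).ncard : ℕ) : ℕ∞) :=
  sep_treewidth_general Rel ar V Pr pa Δ φ ψ η hφ hψ hsat hη1 hη2

end SLRTW
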